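/- arXiv:2410.01422 — 2 statements merged into one kernel-verified Lean document; each statement's English description precedes it below -/
import Mathlib

section
/- Let m and n be even nonnegative integers. If there exists an isomorphism of edge-labeled directed graphs between A(m) and A(n), then m = n. -/
/-- The value of a word over the digits `{0,1,2}`, read as a (hyper)binary expansion:
`wordVal (x₀ … x_k) = Σ x_i · 2^(k-i)`. -/
def wordVal : List ℕ → ℕ
  | [] => 0
  | d :: w => d * 2 ^ w.length + wordVal w

/-- `Hyp n` is the set of hyperbinary expansions of `n`: words over `{0,1,2}` with
nonzero leading digit whose value is `n` (the empty word is the unique expansion of `0`). -/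
def Hyp (n : ℕ) : Set (List ℕ) :=
  {w | (∀ d ∈ w, d ≤ 2) ∧ w.head? ≠ some 0 ∧ wordVal w = n}

/-- Single-step reduction of type `→` : `(x02y, x10y)` or `(2y, 10y)`. -/
def StepArrow (a b : List ℕ) : Prop :=
  (∃ x y : List ℕ, a = x ++ 0 :: 2 :: y ∧ b = x ++ 1 :: 0 :: y) ∨
    (∃ y : List ℕ, a = 2 :: y ∧ b = 1 :: 0 :: y)

/-- Single-step reduction of type `↠` : `(x12y, x20y)`. -/
def StepDouble (a b : List ℕ) : Prop :=
  ∃ x y : List ℕ, a = x ++ 1 :: 2 :: y ∧ b = x ++ 2 :: 0 :: y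

/-- A single-step reduction (of either type). -/
def Step (a b : List ℕ) : Prop := StepArrow a b ∨ StepDouble a b

/-- `bFun n` is the number of hyperbinary expansions of `n`. -/
noncomputable def bFun (n : ℕ) : ℕ := (Hyp n).ncard

/-- The set of arcs of the graph `A(n)`: labeled single-step reductions between
hyperbinary expansions of `n`. -/
def arcs (n : ℕ) : Set (List ℕ × List ℕ) :=
  {p | p.1 ∈ Hyp n ∧ p.2 ∈ Hyp n ∧ Step p.1 p.2}

/-- `aFun n` is the number of arcs of `A(n)`. -/
noncomputable def aFun (n : ℕ) : ℕ := (arcs n).ncard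

/-- The cyclomatic number `v(n) = a(n) - b(n) + 1` of the connected graph `A(n)`. -/
noncomputable def vFun (n : ℕ) : ℕ := aFun n + 1 - bFun n

/-! ### Auxiliary lemmas -/

lemma wordVal_append (q r : List ℕ) :
    wordVal (q ++ r) = wordVal q * 2 ^ r.length + wordVal r := by
  induction q with
  | nil => simp [wordVal]
  | cons a t ih =>
      simp only [List.cons_append, wordVal, List.append_eq, ih, List.length_append, pow_add]
      ring

lemma wordVal_concat (u : List ℕ) (d : ℕ) : wordVal (u ++ [d]) = 2 * wordVal u + d := by
  simp [wordVal_append, wordVal]; ring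

lemma hyp_zero : Hyp 0 = {([] : List ℕ)} := by
  ext w
  constructor
  · rintro ⟨h1, h2, h3⟩
    cases w with
    | nil => rfl
    | cons a t =>
        exfalso
        simp only [wordVal] at h3
        have hpos : 0 < 2 ^ t.length := Nat.pow_pos (by norm_num)
        have ha : a = 0 := by nlinarith [Nat.eq_zero_of_add_eq_zero_right h3]
        subst ha
        exact h2 rfl
  · rintro rfl
    exact ⟨by simp, by simp, rfl⟩

lemma mem_hyp_concat {k d : ℕ} {u : List ℕ} (hu : u ∈ Hyp k) (hd : d ≤ 2)
    (h0 : u = [] → d ≠ 0) : u ++ [d] ∈ Hyp (2 * k + d) := by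
  obtain ⟨h1, h2, h3⟩ := hu
  refine ⟨?_, ?_, ?_⟩
  · intro x hx
    rcases List.mem_append.mp hx with hx | hx
    · exact h1 x hx
    · simp at hx; omega
  · cases u with
    | nil =>
        have := h0 rfl
        simp [List.head?]
        omega
    | cons a t =>
        simpa using h2
  · rw [wordVal_concat, h3]

lemma hyp_decomp {n : ℕ} {w : List ℕ} (hw : w ∈ Hyp n) (hne : w ≠ []) :
    ∃ u d, w = u ++ [d] ∧ d ≤ 2 ∧ u ∈ Hyp (wordVal u) ∧ n = 2 * wordVal u + d ∧
      (u = [] → d ≠ 0) := by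
  rcases List.eq_nil_or_concat w with rfl | ⟨u, d, rfl⟩
  · exact absurd rfl hne
  rw [List.concat_eq_append] at *
  obtain ⟨h1, h2, h3⟩ := hw
  refine ⟨u, d, rfl, h1 d (by simp), ⟨?_, ?_, rfl⟩, by rw [← h3, wordVal_concat], ?_⟩
  · intro x hx; exact h1 x (List.mem_append.mpr (Or.inl hx))
  · cases u with
    | nil => simp
    | cons a t => simpa using h2
  · rintro rfl
    intro hd0
    subst hd0
    exact h2 rfl

lemma hyp_odd (k : ℕ) : Hyp (2 * k + 1) = (fun u => u ++ [1]) '' Hyp k := by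
  ext w
  constructor
  · intro hw
    have hne : w ≠ [] := by
      rintro rfl
      obtain ⟨_, _, h3⟩ := hw
      simp [wordVal] at h3
    obtain ⟨u, d, rfl, hd, hu, hn, h0⟩ := hyp_decomp hw hne
    have hd1 : d = 1 := by omega
    subst hd1
    have hvk : wordVal u = k := by omega
    exact ⟨u, by rwa [hvk] at hu, rfl⟩
  · rintro ⟨u, hu, rfl⟩
    have hk : wordVal u = k := hu.2.2
    have := mem_hyp_concat (k := k) (d := 1) (by rw [← hk]; exact ⟨hu.1, hu.2.1, rfl⟩)
      (by norm_num) (fun _ => one_ne_zero)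
    simpa using this

lemma hyp_even (k : ℕ) :
    Hyp (2 * k + 2) =
      (fun u => u ++ [0]) '' Hyp (k + 1) ∪ (fun u => u ++ [2]) '' Hyp k := by
  ext w
  constructor
  · intro hw
    have hne : w ≠ [] := by
      rintro rfl
      obtain ⟨_, _, h3⟩ := hw
      simp [wordVal] at h3
    obtain ⟨u, d, rfl, hd, hu, hn, h0⟩ := hyp_decomp hw hne
    have : d = 0 ∨ d = 2 := by omega
    rcases this with rfl | rfl
    · left
      have hvk : wordVal u = k + 1 := by omega
      exact ⟨u, by rwa [hvk] at hu, rfl⟩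
    · right
      have hvk : wordVal u = k := by omega
      exact ⟨u, by rwa [hvk] at hu, rfl⟩
  · rintro (⟨u, hu, rfl⟩ | ⟨u, hu, rfl⟩)
    · have hk : wordVal u = k + 1 := hu.2.2
      have hune : u ≠ [] := by
        rintro rfl
        simp [wordVal] at hk
      have := mem_hyp_concat (k := k + 1) (d := 0)
        (by rw [← hk]; exact ⟨hu.1, hu.2.1, rfl⟩) (by norm_num)
        (fun h => absurd h hune)
      simpa [show 2 * (k + 1) + 0 = 2 * k + 2 by ring] using this
    · have hk : wordVal u = k := hu.2.2
      have := mem_hyp_concat (k := k) (d := 2)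
        (by rw [← hk]; exact ⟨hu.1, hu.2.1, rfl⟩) (by norm_num)
        (fun _ => two_ne_zero)
      simpa using this

lemma hyp_finite : ∀ n, (Hyp n).Finite := by
  intro n
  induction n using Nat.strong_induction_on with
  | _ n IH =>
    match n with
    | 0 => rw [hyp_zero]; exact Set.finite_singleton _
    | (n + 1) =>
        rcases Nat.even_or_odd (n + 1) with ⟨k, hk⟩ | ⟨k, hk⟩
        · have hk1 : k ≥ 1 := by omega
          have : n + 1 = 2 * (k - 1) + 2 := by omega
          rw [this, hyp_even]
          exact ((IH (k - 1 + 1) (by omega)).image _).union ((IH (k - 1) (by omega)).image _)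
        · have : n + 1 = 2 * k + 1 := by omega
          rw [this, hyp_odd]
          exact (IH k (by omega)).image _

lemma concat_injective (d : ℕ) : Function.Injective (fun u : List ℕ => u ++ [d]) := by
  intro a b hab
  simpa using congrArg List.dropLast hab

lemma sum_pow_count : ∀ n : ℕ, ∑ w ∈ (hyp_finite n).toFinset, 2 ^ (w.count 1) = n + 1 := by
  intro n
  induction n using Nat.strong_induction_on with
  | _ n IH =>
    match n with
    | 0 =>
        have h : (hyp_finite 0).toFinset = {([] : List ℕ)} := by
          ext w; simp [Set.Finite.mem_toFinset, hyp_zero]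
        rw [h]
        simp
    | (n + 1) =>
        rcases Nat.even_or_odd (n + 1) with ⟨k, hk⟩ | ⟨k, hk⟩
        · -- even : n + 1 = 2*(k-1) + 2
          have hk1 : k ≥ 1 := by omega
          have hform : n + 1 = 2 * (k - 1) + 2 := by omega
          have hset : (hyp_finite (n + 1)).toFinset =
              Finset.image (fun u => u ++ [0]) (hyp_finite (k - 1 + 1)).toFinset ∪
              Finset.image (fun u => u ++ [2]) (hyp_finite (k - 1)).toFinset := by
            ext w
            simp only [Set.Finite.mem_toFinset, Finset.mem_union, Finset.mem_image]
            rw [hform, hyp_even]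
            simp [Set.Finite.mem_toFinset, Set.mem_image]
          have hdisj : Disjoint
              (Finset.image (fun u => u ++ [0]) (hyp_finite (k - 1 + 1)).toFinset)
              (Finset.image (fun u => u ++ [2]) (hyp_finite (k - 1)).toFinset) := by
            rw [Finset.disjoint_left]
            rintro w hw0 hw2
            obtain ⟨u, _, rfl⟩ := Finset.mem_image.mp hw0
            obtain ⟨v, _, hv⟩ := Finset.mem_image.mp hw2
            have := congrArg List.getLast? hv
            simp at this
          rw [hset, Finset.sum_union hdisj,
            Finset.sum_image (fun a _ b _ h => concat_injective 0 h),
            Finset.sum_image (fun a _ b _ h => concat_injective 2 h)]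
          have c0 : ∀ u : List ℕ, (u ++ [0]).count 1 = u.count 1 := by
            intro u; simp [List.count_append]
          have c2 : ∀ u : List ℕ, (u ++ [2]).count 1 = u.count 1 := by
            intro u; simp [List.count_append]
          simp only [c0, c2]
          rw [IH (k - 1 + 1) (by omega), IH (k - 1) (by omega)]
          omega
        · -- odd : n + 1 = 2*k + 1
          have hform : n + 1 = 2 * k + 1 := by omega
          have hset : (hyp_finite (n + 1)).toFinset =
              Finset.image (fun u => u ++ [1]) (hyp_finite k).toFinset := by
            ext w
            simp only [Set.Finite.mem_toFinset, Finset.mem_image]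
            rw [hform, hyp_odd]
            simp [Set.Finite.mem_toFinset, Set.mem_image]
          rw [hset, Finset.sum_image (fun a _ b _ h => concat_injective 1 h)]
          have c1 : ∀ u : List ℕ, (u ++ [1]).count 1 = u.count 1 + 1 := by
            intro u; simp [List.count_append]
          simp only [c1, pow_succ]
          rw [← Finset.sum_mul, IH k (by omega)]
          omega

/-- counts of the digit 1 under the two kinds of steps -/
lemma count_one_arrow {a b : List ℕ} (h : StepArrow a b) : b.count 1 = a.count 1 + 1 := by
  rcases h with ⟨x, y, rfl, rfl⟩ | ⟨y, rfl, rfl⟩ <;>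
    (simp [List.count_append, List.count_cons]; try omega)

lemma count_one_double {a b : List ℕ} (h : StepDouble a b) : a.count 1 = b.count 1 + 1 := by
  obtain ⟨x, y, rfl, rfl⟩ := h
  simp [List.count_append, List.count_cons]
  try omega

/-- find the leftmost 2 -/
lemma split_first_two : ∀ {w : List ℕ}, 2 ∈ w → ∃ p y, w = p ++ 2 :: y ∧ 2 ∉ p := by
  intro w
  induction w with
  | nil => intro h; simp at h
  | cons a t ih =>
      intro h
      by_cases ha : a = 2
      · exact ⟨[], t, by rw [ha]; rfl, by simp⟩
      · have ht : 2 ∈ t := by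
          rcases List.mem_cons.mp h with h' | h'
          · exact absurd h'.symm ha
          · exact h'
        obtain ⟨p, y, rfl, hp⟩ := ih ht
        exact ⟨a :: p, y, rfl, by simp [hp]; omega⟩

/-- if a word of `Hyp n` contains a 2, a step applies, staying in `Hyp n`,
decreasing the digit sum -/
lemma step_exists {n : ℕ} {w : List ℕ} (hw : w ∈ Hyp n) (h2 : 2 ∈ w) :
    ∃ w', w' ∈ Hyp n ∧ Step w w' ∧ w'.sum + 1 = w.sum := by
  obtain ⟨p, y, rfl, hp⟩ := split_first_two h2
  obtain ⟨h1, hh, hv⟩ := hw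
  rcases List.eq_nil_or_concat p with rfl | ⟨q, d, rfl⟩
  · -- leading 2 : w = 2 :: y
    refine ⟨1 :: 0 :: y, ⟨?_, by simp, ?_⟩, Or.inl (Or.inr ⟨y, rfl, rfl⟩), ?_⟩
    · intro x hx
      simp only [List.mem_cons] at hx
      rcases hx with rfl | rfl | hx
      · norm_num
      · norm_num
      · exact h1 x (by simp [hx])
    · rw [← hv]
      simp [wordVal, pow_succ]
      ring
    · simp
      omega
  · rw [List.concat_eq_append, List.append_assoc] at *
    simp only [List.cons_append, List.nil_append] at *
    -- w = q ++ d :: 2 :: y, with d ≤ 1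
    have hd2 : d ≠ 2 := fun h => hp (by simp [h])
    have hdle : d ≤ 2 := h1 d (by simp)
    have hd1 : d ≤ 1 := by omega
    refine ⟨q ++ (d + 1) :: 0 :: y, ⟨?_, ?_, ?_⟩, ?_, ?_⟩
    · intro x hx
      simp only [List.mem_append, List.mem_cons] at hx
      rcases hx with hx | rfl | rfl | hx
      · exact h1 x (by simp [hx])
      · omega
      · norm_num
      · exact h1 x (by simp [hx])
    · cases q with
      | nil => simp
      | cons c r => simpa using hh
    · rw [← hv, wordVal_append, wordVal_append]
      simp [wordVal, pow_succ]
      ring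
    · -- the step itself
      rcases Nat.le_one_iff_eq_zero_or_eq_one.mp hd1 with rfl | rfl
      · exact Or.inl (Or.inl ⟨q, y, rfl, rfl⟩)
      · exact Or.inr ⟨q, y, rfl, rfl⟩
    · simp [List.sum_append]
      omega

/-- uniqueness of 2-free expansions -/
lemma twoFree_unique : ∀ n : ℕ, ∀ u v : List ℕ, u ∈ Hyp n → v ∈ Hyp n →
    2 ∉ u → 2 ∉ v → u = v := by
  intro n
  induction n using Nat.strong_induction_on with
  | _ n IH =>
    intro u v hu hv h2u h2v
    rcases Nat.eq_zero_or_pos n with rfl | hn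
    · rw [hyp_zero] at hu hv
      simp at hu hv
      rw [hu, hv]
    · have hune : u ≠ [] := by
        rintro rfl
        have := hu.2.2
        simp [wordVal] at this
        omega
      have hvne : v ≠ [] := by
        rintro rfl
        have := hv.2.2
        simp [wordVal] at this
        omega
      obtain ⟨u', d, rfl, hd, hu', hnd, _⟩ := hyp_decomp hu hune
      obtain ⟨v', e, rfl, he, hv', hne', _⟩ := hyp_decomp hv hvne
      have hd2 : d ≠ 2 := fun h => h2u (by simp [h])
      have he2 : e ≠ 2 := fun h => h2v (by simp [h])
      have hde : d = e := by omega
      subst hde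
      have hval : wordVal u' = wordVal v' := by omega
      have hless : wordVal u' < n := by omega
      have h2u' : 2 ∉ u' := fun h => h2u (by simp [h])
      have h2v' : 2 ∉ v' := fun h => h2v (by simp [h])
      have := IH (wordVal u') hless u' v' hu' (by rw [hval]; exact hv') h2u' h2v'
      rw [this]

/-- connectivity closure -/
inductive Conn (R : List ℕ → List ℕ → Prop) : List ℕ → List ℕ → Prop
  | rel {a b} : R a b → Conn R a b
  | refl (a) : Conn R a a
  | symm {a b} : Conn R a b → Conn R b a
  | trans {a b c} : Conn R a b → Conn R b c → Conn R a c

lemma conn_aux (m : ℕ) : ∀ s : ℕ, ∀ w₁ w₂ : List ℕ, w₁.sum + w₂.sum ≤ s →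
    w₁ ∈ Hyp m → w₂ ∈ Hyp m →
    Conn (fun a b => Step a b ∧ a ∈ Hyp m ∧ b ∈ Hyp m) w₁ w₂ := by
  intro s
  induction s with
  | zero =>
      intro w₁ w₂ hs h1 h2
      have h21 : 2 ∉ w₁ := fun h =>
        absurd (List.single_le_sum (fun x _ => Nat.zero_le x) 2 h) (by omega)
      have h22 : 2 ∉ w₂ := fun h =>
        absurd (List.single_le_sum (fun x _ => Nat.zero_le x) 2 h) (by omega)
      rw [twoFree_unique m w₁ w₂ h1 h2 h21 h22]
      exact Conn.refl _
  | succ s IH =>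
      intro w₁ w₂ hs h1 h2
      by_cases h21 : 2 ∈ w₁
      · obtain ⟨w₁', hmem, hstep, hsum⟩ := step_exists h1 h21
        exact Conn.trans (Conn.rel ⟨hstep, h1, hmem⟩) (IH w₁' w₂ (by omega) hmem h2)
      · by_cases h22 : 2 ∈ w₂
        · obtain ⟨w₂', hmem, hstep, hsum⟩ := step_exists h2 h22
          exact Conn.trans (IH w₁ w₂' (by omega) h1 hmem)
            (Conn.symm (Conn.rel ⟨hstep, h2, hmem⟩))
        · rw [twoFree_unique m w₁ w₂ h1 h2 h21 h22]
          exact Conn.refl _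

/-- Isomorphism theorem: even nonnegative integers with isomorphic edge-labeled
directed graphs of hyperbinary expansions coincide. -/
theorem even_iso_eq (m n : ℕ) (hm : Even m) (hn : Even n)
    (h : ∃ φ : Hyp m ≃ Hyp n,
      ∀ x y : Hyp m,
        (StepArrow x.1 y.1 ↔ StepArrow (φ x).1 (φ y).1) ∧
        (StepDouble x.1 y.1 ↔ StepDouble (φ x).1 (φ y).1)) :
    m = n := by
  classical
  obtain ⟨φ, hφ⟩ := h
  -- the invariant g
  have hgex : ∃ g : List ℕ → ℤ, ∀ w (hw : w ∈ Hyp m),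
      g w = ((φ ⟨w, hw⟩).1.count 1 : ℤ) - (w.count 1 : ℤ) :=
    ⟨fun w => if hw : w ∈ Hyp m then ((φ ⟨w, hw⟩).1.count 1 : ℤ) - (w.count 1 : ℤ) else 0,
      fun w hw => dif_pos hw⟩
  obtain ⟨g, hgdef⟩ := hgex
  have gstep : ∀ a b : List ℕ, Step a b → a ∈ Hyp m → b ∈ Hyp m → g a = g b := by
    intro a b hstep ha hb
    rw [hgdef a ha, hgdef b hb]
    rcases hstep with harr | hdbl
    · have h1 := count_one_arrow harr
      have h2 := count_one_arrow ((hφ ⟨a, ha⟩ ⟨b, hb⟩).1.mp harr)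
      omega
    · have h1 := count_one_double hdbl
      have h2 := count_one_double ((hφ ⟨a, ha⟩ ⟨b, hb⟩).2.mp hdbl)
      omega
  have gconn : ∀ a b : List ℕ,
      Conn (fun a b => Step a b ∧ a ∈ Hyp m ∧ b ∈ Hyp m) a b → g a = g b := by
    intro a b hab
    induction hab with
    | rel h => exact gstep _ _ h.1 h.2.1 h.2.2
    | refl a => rfl
    | symm _ ih => exact ih.symm
    | trans _ _ ih1 ih2 => exact ih1.trans ih2
  -- Hyp m is nonempty
  have hTm := sum_pow_count m
  have hnem : ∃ u, u ∈ Hyp m := by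
    by_contra hc
    push_neg at hc
    have hemp : (hyp_finite m).toFinset = ∅ := by
      ext w; simp [Set.Finite.mem_toFinset]; exact hc w
    rw [hemp, Finset.sum_empty] at hTm
    omega
  obtain ⟨u₀, hu₀⟩ := hnem
  set p : ℕ := (φ ⟨u₀, hu₀⟩).1.count 1 with hp
  set q : ℕ := u₀.count 1 with hq
  have key : ∀ w (hw : w ∈ Hyp m), (φ ⟨w, hw⟩).1.count 1 + q = w.count 1 + p := by
    intro w hw
    have := gconn w u₀ (conn_aux m (w.sum + u₀.sum) w u₀ le_rfl hw hu₀)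
    rw [hgdef w hw, hgdef u₀ hu₀] at this
    omega
  -- transfer the sums
  have hsum : (n + 1) * 2 ^ q = (m + 1) * 2 ^ p := by
    rw [← sum_pow_count n, ← sum_pow_count m, Finset.sum_mul, Finset.sum_mul]
    refine Finset.sum_nbij'
      (i := fun w => if hw : w ∈ Hyp n then (φ.symm ⟨w, hw⟩).1 else [])
      (j := fun u => if hu : u ∈ Hyp m then (φ ⟨u, hu⟩).1 else [])
      ?_ ?_ ?_ ?_ ?_
    · intro a ha
      rw [Set.Finite.mem_toFinset] at ha ⊢
      simp only [dif_pos ha]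
      exact (φ.symm ⟨a, ha⟩).2
    · intro a ha
      rw [Set.Finite.mem_toFinset] at ha ⊢
      simp only [dif_pos ha]
      exact (φ ⟨a, ha⟩).2
    · intro a ha
      rw [Set.Finite.mem_toFinset] at ha
      simp only [dif_pos ha, dif_pos (φ.symm ⟨a, ha⟩).2]
      have : (⟨(φ.symm ⟨a, ha⟩).1, (φ.symm ⟨a, ha⟩).2⟩ : Hyp m) = φ.symm ⟨a, ha⟩ := rfl
      rw [this, Equiv.apply_symm_apply]
    · intro a ha
      rw [Set.Finite.mem_toFinset] at ha
      simp only [dif_pos ha, dif_pos (φ ⟨a, ha⟩).2]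
      have : (⟨(φ ⟨a, ha⟩).1, (φ ⟨a, ha⟩).2⟩ : Hyp n) = φ ⟨a, ha⟩ := rfl
      rw [this, Equiv.symm_apply_apply]
    · intro a ha
      rw [Set.Finite.mem_toFinset] at ha
      simp only [dif_pos ha]
      have hmem := (φ.symm ⟨a, ha⟩).2
      have hk := key (φ.symm ⟨a, ha⟩).1 hmem
      have : (⟨(φ.symm ⟨a, ha⟩).1, hmem⟩ : Hyp m) = φ.symm ⟨a, ha⟩ := rfl
      rw [this, Equiv.apply_symm_apply] at hk
      rw [← pow_add, ← pow_add]
      -- hk : a.count 1 + q = (φ.symm ⟨a, ha⟩).1.count 1 + p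
      rw [show a.count 1 + q = (φ.symm ⟨a, ha⟩).1.count 1 + p from hk]
  -- finish by parity
  obtain ⟨m', rfl⟩ := hm
  obtain ⟨n', rfl⟩ := hn
  rcases le_total p q with hpq | hpq
  · have h2 : (n' + n' + 1) * 2 ^ p * 2 ^ (q - p) = (m' + m' + 1) * 2 ^ p := by
      rw [← hsum, mul_assoc, ← pow_add]
      congr 2
      omega
    have h3 : (n' + n' + 1) * 2 ^ (q - p) = m' + m' + 1 := by
      have hpos : 0 < 2 ^ p := Nat.pow_pos (by norm_num)
      have := Nat.eq_of_mul_eq_mul_right hpos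
        (by linarith [h2] : (n' + n' + 1) * 2 ^ (q - p) * 2 ^ p = (m' + m' + 1) * 2 ^ p)
      exact this
    rcases Nat.eq_zero_or_pos (q - p) with hqp | hqp
    · rw [hqp, pow_zero, mul_one] at h3
      omega
    · exfalso
      obtain ⟨c, hc⟩ : 2 ∣ 2 ^ (q - p) := dvd_pow_self 2 (by omega)
      have hdvd : (2 : ℕ) ∣ m' + m' + 1 := by
        rw [← h3, hc]; exact ⟨(n' + n' + 1) * c, by ring⟩
      omega
  · have h2 : (n' + n' + 1) * 2 ^ q = (m' + m' + 1) * 2 ^ q * 2 ^ (p - q) := by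
      rw [hsum, mul_assoc, ← pow_add]
      congr 2
      omega
    have h3 : n' + n' + 1 = (m' + m' + 1) * 2 ^ (p - q) := by
      have hpos : 0 < 2 ^ q := Nat.pow_pos (by norm_num)
      exact Nat.eq_of_mul_eq_mul_right hpos (by linarith [h2] :
        (n' + n' + 1) * 2 ^ q = (m' + m' + 1) * 2 ^ (p - q) * 2 ^ q)
    rcases Nat.eq_zero_or_pos (p - q) with hqp | hqp
    · rw [hqp, pow_zero, mul_one] at h3
      omega
    · exfalso
      obtain ⟨c, hc⟩ : 2 ∣ 2 ^ (p - q) := dvd_pow_self 2 (by omega)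
      have hdvd : (2 : ℕ) ∣ n' + n' + 1 := by
        rw [h3, hc]; exact ⟨(m' + m' + 1) * c, by ring⟩
      omega
end

section
/- An even nonnegative integer n satisfies v(n) = 1 if and only if n = 10 or n = 12. -/
namespace HBX

lemma wordVal_append (w : List ℕ) (d : ℕ) :
    wordVal (w ++ [d]) = 2 * wordVal w + d := by
  induction w with
  | nil => simp [wordVal]
  | cons c t ih =>
      simp only [List.cons_append, wordVal, ih, List.length_append, List.length_cons,
        List.length_nil, List.length_singleton, List.append_eq]
      ring

lemma eq_nil_or_concat' (l : List ℕ) : l = [] ∨ ∃ L b, l = L ++ [b] := by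
  rcases List.eq_nil_or_concat l with h | ⟨L, b, h⟩
  · exact Or.inl h
  · exact Or.inr ⟨L, b, by simpa using h⟩

lemma hyp_zero : Hyp 0 = {[]} := by
  ext w
  constructor
  · rintro ⟨hd, hh, hv⟩
    cases w with
    | nil => rfl
    | cons c t =>
        exfalso
        simp only [wordVal] at hv
        have h2 : (0:ℕ) < 2 ^ t.length := Nat.pow_pos (by norm_num)
        have : c = 0 := by nlinarith
        subst this
        simp at hh
  · rintro rfl
    exact ⟨by simp, by simp, rfl⟩

lemma hyp_nonempty_of_pos {n : ℕ} (hn : 0 < n) {w : List ℕ} (hw : w ∈ Hyp n) : w ≠ [] := by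
  rintro rfl
  have := hw.2.2
  simp [wordVal] at this
  omega

/-- Main decomposition/recomposition lemma for appended words. -/
lemma append_mem_hyp_iff {w : List ℕ} {d n : ℕ} :
    w ++ [d] ∈ Hyp n ↔
      (∀ c ∈ w, c ≤ 2) ∧ d ≤ 2 ∧ w.head? ≠ some 0 ∧ (w = [] → d ≠ 0) ∧
        2 * wordVal w + d = n := by
  unfold Hyp
  cases w with
  | nil =>
      simp [wordVal]
  | cons c t =>
      constructor
      · rintro ⟨hd, hh, hv⟩
        refine ⟨fun x hx => hd x (by rcases List.mem_cons.1 hx with h|h <;> simp [h]), hd d (by simp), ?_, by simp, ?_⟩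
        · simpa using hh
        · rw [wordVal_append] at hv; exact hv
      · rintro ⟨hd, hd2, hh, -, hv⟩
        refine ⟨?_, by simpa using hh, by rw [wordVal_append]; exact hv⟩
        intro x hx
        rcases List.mem_append.1 hx with h | h
        · exact hd x h
        · simp at h; omega

lemma append_mem_hyp {w : List ℕ} {m : ℕ} (hw : w ∈ Hyp m) {d : ℕ} (hd : d ≤ 2)
    (hne : w = [] → d ≠ 0) : w ++ [d] ∈ Hyp (2 * m + d) := by
  rw [append_mem_hyp_iff]
  exact ⟨hw.1, hd, hw.2.1, hne, by rw [hw.2.2]⟩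

lemma hyp_odd (m : ℕ) : Hyp (2 * m + 1) = (fun w => w ++ [1]) '' Hyp m := by
  ext u
  constructor
  · intro hu
    have hne : u ≠ [] := hyp_nonempty_of_pos (by omega) hu
    rcases eq_nil_or_concat' u with rfl | ⟨w, d, rfl⟩
    · exact absurd rfl hne
    · rw [append_mem_hyp_iff] at hu
      obtain ⟨h1, h2, h3, h4, h5⟩ := hu
      have hd : d = 1 := by omega
      subst hd
      exact ⟨w, ⟨h1, h3, by omega⟩, rfl⟩
  · rintro ⟨w, hw, rfl⟩
    exact append_mem_hyp hw (by omega) (by simp)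

lemma hyp_even (m : ℕ) :
    Hyp (2 * m + 2) = (fun w => w ++ [0]) '' Hyp (m + 1) ∪ (fun w => w ++ [2]) '' Hyp m := by
  ext u
  constructor
  · intro hu
    have hne : u ≠ [] := hyp_nonempty_of_pos (by omega) hu
    rcases eq_nil_or_concat' u with rfl | ⟨w, d, rfl⟩
    · exact absurd rfl hne
    · rw [append_mem_hyp_iff] at hu
      obtain ⟨h1, h2, h3, h4, h5⟩ := hu
      interval_cases d
      · exact Or.inl ⟨w, ⟨h1, h3, by omega⟩, rfl⟩
      · omega
      · exact Or.inr ⟨w, ⟨h1, h3, by omega⟩, rfl⟩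
  · rintro (⟨w, hw, rfl⟩ | ⟨w, hw, rfl⟩)
    · have := append_mem_hyp hw (d := 0) (by omega) ?_
      · convert this using 2; omega
      · rintro rfl h
        have := hw.2.2
        simp [wordVal] at this
    · exact append_mem_hyp hw (d := 2) (by omega) (by simp)

lemma hyp_finite : ∀ n, (Hyp n).Finite := by
  intro n
  induction n using Nat.strong_induction_on with
  | _ n ih =>
    match n with
    | 0 => rw [hyp_zero]; exact Set.finite_singleton _
    | (m + 1) =>
        rcases Nat.even_or_odd (m + 1) with ⟨k, hk⟩ | ⟨k, hk⟩
        · obtain ⟨k', rfl⟩ : ∃ k', k = k' + 1 := ⟨k - 1, by omega⟩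
          have : m + 1 = 2 * k' + 2 := by omega
          rw [this, hyp_even]
          exact ((ih _ (by omega)).image _).union ((ih _ (by omega)).image _)
        · have : m + 1 = 2 * k + 1 := by omega
          rw [this, hyp_odd]
          exact (ih _ (by omega)).image _

end HBX

namespace HBX

def ESet (n : ℕ) : Set (List ℕ) := {w ∈ Hyp n | w.getLast? = some 2}

noncomputable def eFun (n : ℕ) : ℕ := (ESet n).ncard

lemma app_inj (d : ℕ) : Function.Injective (fun w : List ℕ => w ++ [d]) := by
  intro a b h
  simpa using (List.append_left_inj _).1 h

lemma b_zero : bFun 0 = 1 := by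
  unfold bFun; rw [hyp_zero]; simp

lemma b_odd (m : ℕ) : bFun (2 * m + 1) = bFun m := by
  unfold bFun; rw [hyp_odd]; exact Set.ncard_image_of_injective _ (app_inj 1)

lemma hyp_last_even_disj (m : ℕ) :
    Disjoint ((fun w => w ++ [0]) '' Hyp (m + 1)) ((fun w => w ++ [2]) '' Hyp m) := by
  rw [Set.disjoint_left]
  rintro x ⟨w, -, rfl⟩ ⟨v, -, h⟩
  simp only at h
  have h0 := congrArg List.getLast? h
  rw [List.getLast?_concat, List.getLast?_concat] at h0
  simp at h0

lemma b_even (m : ℕ) : bFun (2 * m + 2) = bFun (m + 1) + bFun m := by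
  unfold bFun
  rw [hyp_even, Set.ncard_union_eq (hyp_last_even_disj m) ((hyp_finite _).image _)
    ((hyp_finite _).image _), Set.ncard_image_of_injective _ (app_inj 0),
    Set.ncard_image_of_injective _ (app_inj 2)]

lemma b_pos : ∀ n, 0 < bFun n := by
  intro n
  induction n using Nat.strong_induction_on with
  | _ n ih =>
    match n with
    | 0 => rw [b_zero]; omega
    | (m + 1) =>
        rcases Nat.even_or_odd (m + 1) with ⟨k, hk⟩ | ⟨k, hk⟩
        · obtain ⟨k', rfl⟩ : ∃ k', k = k' + 1 := ⟨k - 1, by omega⟩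
          have h : m + 1 = 2 * k' + 2 := by omega
          rw [h, b_even]
          have := ih k' (by omega)
          omega
        · have h : m + 1 = 2 * k + 1 := by omega
          rw [h, b_odd]
          exact ih k (by omega)

lemma eset_subset (n : ℕ) : ESet n ⊆ Hyp n := fun w hw => hw.1

lemma e_zero : eFun 0 = 0 := by
  unfold eFun
  have : ESet 0 = ∅ := by
    rw [Set.eq_empty_iff_forall_notMem]
    rintro w ⟨hw, hl⟩
    rw [hyp_zero] at hw
    subst hw
    simp at hl
  rw [this]; simp

lemma e_odd (m : ℕ) : eFun (2 * m + 1) = 0 := by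
  unfold eFun
  have : ESet (2 * m + 1) = ∅ := by
    rw [Set.eq_empty_iff_forall_notMem]
    rintro w ⟨hw, hl⟩
    rw [hyp_odd] at hw
    obtain ⟨v, -, rfl⟩ := hw
    rw [List.getLast?_concat] at hl
    simp at hl
  rw [this]; simp

lemma e_even (m : ℕ) : eFun (2 * m + 2) = bFun m := by
  unfold eFun bFun
  have : ESet (2 * m + 2) = (fun w => w ++ [2]) '' Hyp m := by
    ext w
    constructor
    · rintro ⟨hw, hl⟩
      rw [hyp_even] at hw
      rcases hw with ⟨v, -, rfl⟩ | h
      · rw [List.getLast?_concat] at hl; simp at hl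
      · exact h
    · rintro ⟨v, hv, rfl⟩
      refine ⟨?_, List.getLast?_concat⟩
      rw [hyp_even]
      exact Or.inr ⟨v, hv, rfl⟩
  rw [this, Set.ncard_image_of_injective _ (app_inj 2)]

lemma e_le_b (n : ℕ) : eFun n ≤ bFun n :=
  Set.ncard_le_ncard (eset_subset n) (hyp_finite n)

lemma e_lt_b : ∀ n, eFun n < bFun n := by
  intro n
  match n with
  | 0 => rw [e_zero, b_zero]; omega
  | (m + 1) =>
      rcases Nat.even_or_odd (m + 1) with ⟨k, hk⟩ | ⟨k, hk⟩
      · obtain ⟨k', rfl⟩ : ∃ k', k = k' + 1 := ⟨k - 1, by omega⟩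
        have h : m + 1 = 2 * k' + 2 := by omega
        rw [h, e_even, b_even]
        have := b_pos (k' + 1)
        omega
      · have h : m + 1 = 2 * k + 1 := by omega
        rw [h, e_odd, b_odd]
        exact b_pos k

lemma diff_ncard (m : ℕ) : (Hyp m \ ESet m).ncard + eFun m = bFun m :=
  Set.ncard_diff_add_ncard_of_subset (eset_subset m) (hyp_finite m)

end HBX

namespace HBX

def appP (d : ℕ) (p : List ℕ × List ℕ) : List ℕ × List ℕ := (p.1 ++ [d], p.2 ++ [d])

def incLast : List ℕ → List ℕ
  | [] => [1]
  | [d] => [d + 1]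
  | d :: c :: t => d :: incLast (c :: t)

def crossMap (w : List ℕ) : List ℕ × List ℕ := (w ++ [2], incLast w ++ [0])

lemma incLast_concat (x : List ℕ) (d : ℕ) : incLast (x ++ [d]) = x ++ [d + 1] := by
  induction x with
  | nil => rfl
  | cons c t ih =>
      cases t with
      | nil => rfl
      | cons c' t' =>
          simp only [List.cons_append, incLast, List.append_eq] at ih ⊢
          rw [ih]

lemma step_ne_nil {u v : List ℕ} (h : Step u v) : u ≠ [] ∧ v ≠ [] := by
  rcases h with (⟨x, y, rfl, rfl⟩ | ⟨y, rfl, rfl⟩) | ⟨x, y, rfl, rfl⟩ <;>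
    constructor <;> simp

lemma step_append {u v : List ℕ} (t : List ℕ) (h : Step u v) : Step (u ++ t) (v ++ t) := by
  rcases h with (⟨x, y, rfl, rfl⟩ | ⟨y, rfl, rfl⟩) | ⟨x, y, rfl, rfl⟩
  · exact Or.inl (Or.inl ⟨x, y ++ t, by simp, by simp⟩)
  · exact Or.inl (Or.inr ⟨y ++ t, by simp, by simp⟩)
  · exact Or.inr ⟨x, y ++ t, by simp, by simp⟩

lemma step_cases {u v : List ℕ} (h : Step u v) :
    (∃ u' v' d, u = u' ++ [d] ∧ v = v' ++ [d] ∧ Step u' v') ∨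
    (∃ x, u = (x ++ [0]) ++ [2] ∧ v = (x ++ [1]) ++ [0]) ∨
    (u = [2] ∧ v = [1, 0]) ∨
    (∃ x, u = (x ++ [1]) ++ [2] ∧ v = (x ++ [2]) ++ [0]) := by
  rcases h with (⟨x, y, rfl, rfl⟩ | ⟨y, rfl, rfl⟩) | ⟨x, y, rfl, rfl⟩
  · rcases eq_nil_or_concat' y with rfl | ⟨y', d, rfl⟩
    · exact Or.inr (Or.inl ⟨x, by simp, by simp⟩)
    · exact Or.inl ⟨x ++ 0 :: 2 :: y', x ++ 1 :: 0 :: y', d, by simp, by simp,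
        Or.inl (Or.inl ⟨x, y', rfl, rfl⟩)⟩
  · rcases eq_nil_or_concat' y with rfl | ⟨y', d, rfl⟩
    · exact Or.inr (Or.inr (Or.inl ⟨rfl, rfl⟩))
    · exact Or.inl ⟨2 :: y', 1 :: 0 :: y', d, by simp, by simp,
        Or.inl (Or.inr ⟨y', rfl, rfl⟩)⟩
  · rcases eq_nil_or_concat' y with rfl | ⟨y', d, rfl⟩
    · exact Or.inr (Or.inr (Or.inr ⟨x, by simp, by simp⟩))
    · exact Or.inl ⟨x ++ 1 :: 2 :: y', x ++ 2 :: 0 :: y', d, by simp, by simp,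
        Or.inr ⟨x, y', rfl, rfl⟩⟩

lemma arcs_zero : arcs 0 = ∅ := by
  rw [Set.eq_empty_iff_forall_notMem]
  rintro ⟨u, v⟩ ⟨hu, -, hs⟩
  rw [hyp_zero] at hu
  exact (step_ne_nil hs).1 hu

end HBX

namespace HBX

lemma hyp_concat_elim {w : List ℕ} {d n : ℕ} (h : w ++ [d] ∈ Hyp n) :
    w ∈ Hyp (wordVal w) ∧ d ≤ 2 ∧ 2 * wordVal w + d = n := by
  rw [append_mem_hyp_iff] at h
  exact ⟨⟨h.1, h.2.2.1, rfl⟩, h.2.1, h.2.2.2.2⟩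

lemma concat_mem_hyp_of_concat {x : List ℕ} {d d' m : ℕ} (h : x ++ [d] ∈ Hyp m) (hd' : d' ≤ 2)
    (h0 : d' ≠ 0) : x ++ [d'] ∈ Hyp (2 * wordVal x + d') := by
  rw [append_mem_hyp_iff] at h ⊢
  exact ⟨h.1, hd', h.2.2.1, fun _ => h0, rfl⟩

lemma hyp_cast {n n' : ℕ} {w : List ℕ} (hw : w ∈ Hyp n) (h : n = n') : w ∈ Hyp n' := h ▸ hw

lemma arcs_odd (m : ℕ) : arcs (2 * m + 1) = appP 1 '' arcs m := by
  ext ⟨u, v⟩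
  constructor
  · rintro ⟨hu, hv, hs⟩
    rcases step_cases hs with
      ⟨u', v', d, rfl, rfl, hs'⟩ | ⟨x, rfl, rfl⟩ | ⟨rfl, rfl⟩ | ⟨x, rfl, rfl⟩
    · obtain ⟨hu', hd, hval⟩ := hyp_concat_elim hu
      obtain ⟨hv', hd2, hval2⟩ := hyp_concat_elim hv
      have hd1 : d = 1 := by omega
      subst hd1
      have h1 : wordVal u' = m := by omega
      have h2 : wordVal v' = m := by omega
      rw [h1] at hu'; rw [h2] at hv'
      exact ⟨(u', v'), ⟨hu', hv', hs'⟩, rfl⟩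
    · obtain ⟨-, -, hval⟩ := hyp_concat_elim hu
      omega
    · have h := hu.2.2
      simp [wordVal] at h <;> omega
    · obtain ⟨-, -, hval⟩ := hyp_concat_elim hu
      omega
  · rintro ⟨⟨u', v'⟩, ⟨hu', hv', hs'⟩, heq⟩
    simp only [appP, Prod.mk.injEq] at heq
    obtain ⟨rfl, rfl⟩ := heq
    refine ⟨?_, ?_, step_append [1] hs'⟩
    · exact append_mem_hyp hu' (by omega) (by simp)
    · exact append_mem_hyp hv' (by omega) (by simp)

lemma arcs_even (m : ℕ) :
    arcs (2 * m + 2) =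
      (appP 0 '' arcs (m + 1) ∪ appP 2 '' arcs m) ∪ crossMap '' (Hyp m \ ESet m) := by
  ext ⟨u, v⟩
  constructor
  · rintro ⟨hu, hv, hs⟩
    rcases step_cases hs with
      ⟨u', v', d, rfl, rfl, hs'⟩ | ⟨x, rfl, rfl⟩ | ⟨rfl, rfl⟩ | ⟨x, rfl, rfl⟩
    · obtain ⟨hu', hd, hval⟩ := hyp_concat_elim hu
      obtain ⟨hv', hd2, hval2⟩ := hyp_concat_elim hv
      have : d = 0 ∨ d = 2 := by omega
      rcases this with rfl | rfl
      · have h1 : wordVal u' = m + 1 := by omega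
        have h2 : wordVal v' = m + 1 := by omega
        rw [h1] at hu'; rw [h2] at hv'
        exact Or.inl (Or.inl ⟨(u', v'), ⟨hu', hv', hs'⟩, rfl⟩)
      · have h1 : wordVal u' = m := by omega
        have h2 : wordVal v' = m := by omega
        rw [h1] at hu'; rw [h2] at hv'
        exact Or.inl (Or.inr ⟨(u', v'), ⟨hu', hv', hs'⟩, rfl⟩)
    · -- u = (x ++ [0]) ++ [2], v = (x ++ [1]) ++ [0]
      obtain ⟨hw, -, hval⟩ := hyp_concat_elim hu
      have h1 : wordVal (x ++ [0]) = m := by omega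
      rw [h1] at hw
      refine Or.inr ⟨x ++ [0], ⟨hw, ?_⟩, ?_⟩
      · rintro ⟨-, hlast⟩
        rw [List.getLast?_concat] at hlast
        simp at hlast
      · simp [crossMap, incLast_concat]
    · -- u = [2], v = [1, 0]
      have hm : m = 0 := by
        have h := hu.2.2
        simp [wordVal] at h
        omega
      subst hm
      refine Or.inr ⟨[], ⟨?_, ?_⟩, ?_⟩
      · rw [hyp_zero]; rfl
      · rintro ⟨-, hlast⟩; simp at hlast
      · simp [crossMap, incLast]
    · -- u = (x ++ [1]) ++ [2], v = (x ++ [2]) ++ [0]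
      obtain ⟨hw, -, hval⟩ := hyp_concat_elim hu
      have h1 : wordVal (x ++ [1]) = m := by omega
      rw [h1] at hw
      refine Or.inr ⟨x ++ [1], ⟨hw, ?_⟩, ?_⟩
      · rintro ⟨-, hlast⟩
        rw [List.getLast?_concat] at hlast
        simp at hlast
      · simp [crossMap, incLast_concat]
  · rintro ((⟨⟨u', v'⟩, ⟨hu', hv', hs'⟩, heq⟩ | ⟨⟨u', v'⟩, ⟨hu', hv', hs'⟩, heq⟩) |
      ⟨w, ⟨hw, hwE⟩, heq⟩) <;>
      simp only [appP, crossMap, Prod.mk.injEq] at heq <;> obtain ⟨rfl, rfl⟩ := heq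
    · have hne := step_ne_nil hs'
      refine ⟨?_, ?_, step_append [0] hs'⟩
      · exact hyp_cast (append_mem_hyp hu' (d := 0) (by omega) (fun h => absurd h hne.1)) (by omega)
      · exact hyp_cast (append_mem_hyp hv' (d := 0) (by omega) (fun h => absurd h hne.2)) (by omega)
    · refine ⟨?_, ?_, step_append [2] hs'⟩
      · exact append_mem_hyp hu' (by omega) (by simp)
      · exact append_mem_hyp hv' (by omega) (by simp)
    · rcases eq_nil_or_concat' w with rfl | ⟨x, d, rfl⟩
      · have hm : m = 0 := by
          have h := hw.2.2
          simp [wordVal] at h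
          omega
        subst hm
        refine ⟨?_, ?_, Or.inl (Or.inr ⟨[], by simp [crossMap, incLast], ?_⟩)⟩
        · refine ⟨by simp [crossMap], by simp [crossMap], ?_⟩
          simp [crossMap, wordVal]
        · refine ⟨by simp [crossMap, incLast] <;> omega, by simp [crossMap, incLast], ?_⟩
          simp [crossMap, incLast, wordVal]
        · simp [crossMap, incLast]
      · -- w = x ++ [d], d ∈ {0, 1}
        have hd2 : d ≤ 2 := hw.1 d (by simp)
        have hdne : d ≠ 2 := by
          rintro rfl
          exact hwE ⟨hw, List.getLast?_concat⟩
        obtain ⟨hwh, -, hval⟩ := hyp_concat_elim hw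
        interval_cases d
        · -- w = x ++ [0] : arc ((x++[0])++[2], (x++[1])++[0]), step arrow
          have hx1 : x ++ [1] ∈ Hyp (2 * wordVal x + 1) :=
            concat_mem_hyp_of_concat hw (by omega) (by omega)
          refine ⟨?_, ?_, Or.inl (Or.inl ⟨x, [], by simp [crossMap], ?_⟩)⟩
          · exact hyp_cast (append_mem_hyp hw (d := 2) (by omega) (by simp)) (by omega)
          · have h2 := append_mem_hyp hx1 (d := 0) (by omega) (by simp)
            exact hyp_cast (by simpa [incLast_concat] using h2) (by omega)
          · simp [crossMap, incLast_concat]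
        · -- w = x ++ [1] : arc ((x++[1])++[2], (x++[2])++[0]), step double
          have hx2 : x ++ [2] ∈ Hyp (2 * wordVal x + 2) :=
            concat_mem_hyp_of_concat hw (by omega) (by omega)
          refine ⟨?_, ?_, Or.inr ⟨x, [], by simp [crossMap], ?_⟩⟩
          · exact hyp_cast (append_mem_hyp hw (d := 2) (by omega) (by simp)) (by omega)
          · have h2 := append_mem_hyp hx2 (d := 0) (by omega) (by simp)
            exact hyp_cast (by simpa [incLast_concat] using h2) (by omega)
          · simp [crossMap, incLast_concat]
        · omega

end HBX

namespace HBX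

lemma arcs_finite (n : ℕ) : (arcs n).Finite :=
  Set.Finite.subset ((hyp_finite n).prod (hyp_finite n)) (fun p hp => ⟨hp.1, hp.2.1⟩)

lemma appP_inj (d : ℕ) : Function.Injective (appP d) := by
  rintro ⟨a, b⟩ ⟨c, e⟩ h
  simp only [appP, Prod.mk.injEq] at h
  obtain ⟨h1, h2⟩ := h
  rw [List.append_left_inj] at h1 h2
  simp [h1, h2]

lemma crossMap_inj : Function.Injective crossMap := by
  intro a b h
  simp only [crossMap, Prod.mk.injEq] at h
  rw [List.append_left_inj] at h
  exact h.1

lemma a_zero : aFun 0 = 0 := by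
  unfold aFun; rw [arcs_zero]; simp

lemma a_odd (m : ℕ) : aFun (2 * m + 1) = aFun m := by
  unfold aFun; rw [arcs_odd]; exact Set.ncard_image_of_injective _ (appP_inj 1)

lemma last_ne_of_concat {a c : List ℕ} {x y : ℕ} (hxy : x ≠ y) : a ++ [x] ≠ c ++ [y] := by
  intro h
  have := congrArg List.getLast? h
  rw [List.getLast?_concat, List.getLast?_concat] at this
  simp at this
  exact hxy this

lemma disj_AB (m : ℕ) : Disjoint (appP 0 '' arcs (m + 1)) (appP 2 '' arcs m) := by
  rw [Set.disjoint_left]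
  rintro p ⟨⟨a, b⟩, -, rfl⟩ ⟨⟨c, e⟩, -, h⟩
  simp only [appP, Prod.mk.injEq] at h
  exact last_ne_of_concat (by omega) h.1

lemma disj_ABC (m : ℕ) :
    Disjoint (appP 0 '' arcs (m + 1) ∪ appP 2 '' arcs m) (crossMap '' (Hyp m \ ESet m)) := by
  rw [Set.disjoint_left]
  rintro p (⟨⟨a, b⟩, -, rfl⟩ | ⟨⟨a, b⟩, -, rfl⟩) ⟨w, -, h⟩
  · simp only [appP, crossMap, Prod.mk.injEq] at h
    exact last_ne_of_concat (by omega) h.1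
  · simp only [appP, crossMap, Prod.mk.injEq] at h
    exact last_ne_of_concat (by omega) h.2

lemma a_even (m : ℕ) : aFun (2 * m + 2) + eFun m = aFun (m + 1) + aFun m + bFun m := by
  have hfA := (arcs_finite (m + 1)).image (appP 0)
  have hfB := (arcs_finite m).image (appP 2)
  have hfC := ((hyp_finite m).diff (t := ESet m)).image crossMap
  unfold aFun
  rw [arcs_even, Set.ncard_union_eq (disj_ABC m) (hfA.union hfB) hfC,
    Set.ncard_union_eq (disj_AB m) hfA hfB,
    Set.ncard_image_of_injective _ (appP_inj 0), Set.ncard_image_of_injective _ (appP_inj 2),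
    Set.ncard_image_of_injective _ crossMap_inj]
  have hd := diff_ncard m
  omega

end HBX

namespace HBX

lemma two_pow_pos' (k : ℕ) : 0 < 2 ^ k := Nat.pow_pos (by norm_num)

lemma pow2_eq_odd {k t : ℕ} (h : 2 ^ k = 2 * t + 1) : k = 0 ∧ t = 0 := by
  cases k with
  | zero => simp at h; omega
  | succ j => rw [pow_succ] at h; omega

lemma pow2_eq_double {k t : ℕ} (h : 2 ^ k = 2 * t + 2) : ∃ j, k = j + 1 ∧ 2 ^ j = t + 1 := by
  cases k with
  | zero => simp at h
  | succ j => rw [pow_succ] at h; exact ⟨j, rfl, by omega⟩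

lemma pow2_ne_six_pow2 {j k : ℕ} : 2 ^ j ≠ 6 * 2 ^ k := by
  intro h
  have h3 : (3 : ℕ) ∣ 2 ^ j := ⟨2 * 2 ^ k, by omega⟩
  have := Nat.Prime.dvd_of_dvd_pow (by norm_num) h3
  omega

lemma pow2_ne_six : ∀ k, (2 : ℕ) ^ k ≠ 6 := by
  intro k h
  have h3 : (3 : ℕ) ∣ 2 ^ k := ⟨2, by omega⟩
  have := Nat.Prime.dvd_of_dvd_pow (by norm_num) h3
  omega

lemma pow2_eq_pow2_succ {k j : ℕ} (h : 2 ^ k = 2 ^ j + 1) : k = 1 ∧ j = 0 := by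
  cases j with
  | zero =>
      refine ⟨?_, rfl⟩
      simp only [pow_zero] at h
      cases k with
      | zero => simp at h
      | succ i =>
          rw [pow_succ] at h
          have hi := two_pow_pos' i
          have h1 : 2 ^ i = 1 := by omega
          cases i with
          | zero => rfl
          | succ l => rw [pow_succ] at h1; have := two_pow_pos' l; omega
  | succ i =>
      rw [pow_succ] at h
      cases k with
      | zero => have := two_pow_pos' i; omega
      | succ l => rw [pow_succ] at h; omega

lemma not_pow2 {c : ℕ} (h1 : c % 2 = 1) (h2 : c ≠ 1) : ¬ ∃ k, c = 2 ^ k := by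
  rintro ⟨k, rfl⟩
  cases k with
  | zero => simp at h2
  | succ j => rw [pow_succ] at h1; omega

lemma not_six_pow2 {c : ℕ} (h1 : c % 2 = 1) : ¬ ∃ k, c = 6 * 2 ^ k := by
  rintro ⟨k, hk⟩
  have h : 6 * 2 ^ k = 2 * (3 * 2 ^ k) := by ring
  omega

lemma six_pow_shift {m : ℕ} :
    (m = 2 ∨ ∃ k, m + 1 = 6 * 2 ^ k) ↔ (∃ k, 2 * m + 2 = 6 * 2 ^ k) := by
  constructor
  · rintro (rfl | ⟨k, hk⟩)
    · exact ⟨0, by norm_num⟩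
    · exact ⟨k + 1, by rw [pow_succ]; omega⟩
  · rintro ⟨k, hk⟩
    cases k with
    | zero => left; simp at hk; omega
    | succ j => right; exact ⟨j, by rw [pow_succ] at hk; omega⟩

/-- The master induction: bounds and characterizations of `aFun`, `bFun`, `eFun`. -/
lemma key : ∀ n : ℕ,
    (bFun n ≤ aFun n + 1) ∧
    (eFun n ≤ aFun n) ∧
    (aFun n = 0 ↔ ∃ k, n + 1 = 2 ^ k) ∧
    (aFun n = 1 ↔ n = 2 ∨ ∃ k, n + 1 = 6 * 2 ^ k) ∧
    (aFun n = eFun n ↔ (∃ k, n + 1 = 2 ^ k) ∨ (∃ k, n + 2 = 2 ^ k)) ∧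
    (aFun n = eFun n + 1 ↔ n = 4 ∨ ∃ k, n + 1 = 6 * 2 ^ k) := by
  intro n
  induction n using Nat.strong_induction_on with
  | _ n ih =>
    match n with
    | 0 =>
        have ha0 : aFun 0 = 0 := a_zero
        have hb0 : bFun 0 = 1 := b_zero
        have he0 : eFun 0 = 0 := e_zero
        refine ⟨by omega, by omega, ?_, ?_, ?_, ?_⟩
        · constructor
          · intro _; exact ⟨0, rfl⟩
          · intro _; omega
        · constructor
          · intro h; exact absurd h (by omega)
          · rintro (h | ⟨k, hk⟩)
            · omega
            · have := two_pow_pos' k; omega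
        · constructor
          · intro _; exact Or.inl ⟨0, rfl⟩
          · intro _; omega
        · constructor
          · intro h; exact absurd h (by omega)
          · rintro (h | ⟨k, hk⟩)
            · omega
            · have := two_pow_pos' k; omega
    | (t + 1) =>
      rcases Nat.even_or_odd (t + 1) with ⟨s, hseq⟩ | ⟨m, hm⟩
      · -- even case : t + 1 = 2 * m + 2
        obtain ⟨m, rfl⟩ : ∃ m, s = m + 1 := ⟨s - 1, by omega⟩
        have hn : t + 1 = 2 * m + 2 := by omega
        rw [hn]
        obtain ⟨ihb1, ihe1, ih01, ih11, ihee1, ihe11⟩ := ih (m + 1) (by omega)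
        obtain ⟨ihb, ihe, ih0, ih1, ihee, ihe1'⟩ := ih m (by omega)
        have ha := a_even m
        have hb := b_even m
        have he := e_even m
        have helt := e_lt_b m
        have hbp := b_pos m
        have hbp1 := b_pos (m + 1)
        refine ⟨by omega, by omega, ?_, ?_, ?_, ?_⟩
        -- P3 : both sides false
        · constructor
          · intro h; omega
          · intro h; exact absurd h (not_pow2 (c := 2 * m + 2 + 1) (by omega) (by omega))
        -- P4
        · constructor
          · intro h
            left
            have h1 : aFun (m + 1) = 0 := by omega
            have h2 : aFun m = 0 := by omega
            obtain ⟨k, hk⟩ := ih01.1 h1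
            obtain ⟨j, hj⟩ := ih0.1 h2
            obtain ⟨hk1, hj0⟩ := pow2_eq_pow2_succ (k := k) (j := j) (by omega)
            subst hk1
            norm_num at hk
            omega
          · rintro (h | h)
            · have hm0 : m = 0 := by omega
              subst hm0
              have h01 : aFun (0 + 1) = 0 := by
                have h' := a_odd 0
                norm_num at h' ⊢
                rw [h', a_zero]
              have he0 : eFun 0 = 0 := e_zero
              have ha0 : aFun 0 = 0 := a_zero
              have hb0 : bFun 0 = 1 := b_zero
              omega
            · exact absurd h (not_six_pow2 (c := 2 * m + 2 + 1) (by omega))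
        -- P5
        · rw [he]
          constructor
          · intro h
            have h1 : aFun (m + 1) = 0 := by omega
            obtain ⟨k, hk⟩ := ih01.1 h1
            exact Or.inr ⟨k + 1, by rw [pow_succ]; omega⟩
          · rintro (h | ⟨k, hk⟩)
            · exact absurd h (not_pow2 (c := 2 * m + 2 + 1) (by omega) (by omega))
            · obtain ⟨j, -, hj⟩ := pow2_eq_double (k := k) (t := m + 1) (by omega)
              have h1 : aFun (m + 1) = 0 := ih01.2 ⟨j, by omega⟩
              have h2 : aFun m = eFun m := ihee.2 (Or.inr ⟨j, by omega⟩)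
              omega
        -- P6
        · rw [he]
          constructor
          · intro h
            have hcase : (aFun (m + 1) = 1 ∧ aFun m = eFun m) ∨
                (aFun (m + 1) = 0 ∧ aFun m = eFun m + 1) := by omega
            left
            rcases hcase with ⟨h1, h2⟩ | ⟨h1, h2⟩
            · rcases ih11.1 h1 with h3 | ⟨k, hk⟩
              · omega
              · rcases ihee.1 h2 with ⟨j, hj⟩ | ⟨j, hj⟩
                · exfalso
                  have h6 : 6 * 2 ^ k = 2 * (3 * 2 ^ k) := by ring
                  have hkp := two_pow_pos' k
                  obtain ⟨h0, -⟩ := pow2_eq_odd (k := j) (t := 3 * 2 ^ k - 1) (by omega)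
                  subst h0
                  norm_num at hj
                  omega
                · exact absurd (by omega : (2:ℕ) ^ j = 6 * 2 ^ k) pow2_ne_six_pow2
            · obtain ⟨k, hk⟩ := ih01.1 h1
              rcases ihe1'.1 h2 with h3 | ⟨j, hj⟩
              · exfalso
                subst h3
                exact pow2_ne_six k (by omega)
              · exfalso
                have h6 : 6 * 2 ^ j = 2 * (3 * 2 ^ j) := by ring
                obtain ⟨h0, -⟩ := pow2_eq_odd (k := k) (t := 3 * 2 ^ j) (by omega)
                subst h0
                have := two_pow_pos' j
                rw [pow_zero] at hk
                omega
          · rintro (h | h)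
            · have hm1 : m = 1 := by omega
              subst hm1
              have ha2 : aFun (1 + 1) = 1 := ih11.2 (Or.inl rfl)
              have he1 : eFun 1 = 0 := by
                have h' := e_odd 0; norm_num at h' ⊢; exact h'
              have ha1 : aFun 1 = 0 := by
                have h' := a_odd 0; norm_num at h' ⊢; rw [h', a_zero]
              have hb1 : bFun 1 = 1 := by
                have h' := b_odd 0; norm_num at h' ⊢; rw [h', b_zero]
              omega
            · exact absurd h (not_six_pow2 (c := 2 * m + 2 + 1) (by omega))
      · -- odd case : t + 1 = 2 * m + 1
        have hn : t + 1 = 2 * m + 1 := by omega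
        rw [hn]
        obtain ⟨ihb, ihe, ih0, ih1, ihee, ihe1'⟩ := ih m (by omega)
        have ha := a_odd m
        have hb := b_odd m
        have he := e_odd m
        refine ⟨by omega, by omega, ?_, ?_, ?_, ?_⟩
        · constructor
          · intro h
            obtain ⟨k, hk⟩ := ih0.1 (by omega)
            exact ⟨k + 1, by rw [pow_succ]; omega⟩
          · rintro ⟨k, hk⟩
            obtain ⟨j, -, hj⟩ := pow2_eq_double (k := k) (t := m) (by omega)
            have := ih0.2 ⟨j, by omega⟩
            omega
        · constructor
          · intro h
            obtain ⟨k, hk⟩ := six_pow_shift.1 (ih1.1 (by omega))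
            exact Or.inr ⟨k, by omega⟩
          · rintro (h | ⟨k, hk⟩)
            · omega
            · have := ih1.2 (six_pow_shift.2 ⟨k, by omega⟩)
              omega
        · constructor
          · intro h
            obtain ⟨k, hk⟩ := ih0.1 (by omega)
            exact Or.inl ⟨k + 1, by rw [pow_succ]; omega⟩
          · rintro (⟨k, hk⟩ | h)
            · obtain ⟨j, -, hj⟩ := pow2_eq_double (k := k) (t := m) (by omega)
              have := ih0.2 ⟨j, by omega⟩
              omega
            · exact absurd h (not_pow2 (c := 2 * m + 1 + 2) (by omega) (by omega))
        · constructor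
          · intro h
            obtain ⟨k, hk⟩ := six_pow_shift.1 (ih1.1 (by omega))
            exact Or.inr ⟨k, by omega⟩
          · rintro (h | ⟨k, hk⟩)
            · omega
            · have := ih1.2 (six_pow_shift.2 ⟨k, by omega⟩)
              omega

end HBX

namespace HBX

lemma b_one : bFun 1 = 1 := by have h := b_odd 0; norm_num at h; rw [h, b_zero]
lemma a_one : aFun 1 = 0 := by have h := a_odd 0; norm_num at h; rw [h, a_zero]
lemma e_one : eFun 1 = 0 := by have h := e_odd 0; norm_num at h; exact h
lemma b_two : bFun 2 = 2 := by have h := b_even 0; norm_num at h; rw [h, b_one, b_zero]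
lemma e_two : eFun 2 = 1 := by have h := e_even 0; norm_num at h; rw [h, b_zero]
lemma a_two : aFun 2 = 1 := by
  have h := a_even 0; norm_num at h
  rw [e_zero, a_one, a_zero, b_zero] at h; omega
lemma b_three : bFun 3 = 1 := by have h := b_odd 1; norm_num at h; rw [h, b_one]
lemma a_three : aFun 3 = 0 := by have h := a_odd 1; norm_num at h; rw [h, a_one]
lemma b_four : bFun 4 = 3 := by have h := b_even 1; norm_num at h; rw [h, b_two, b_one]
lemma e_four : eFun 4 = 1 := by have h := e_even 1; norm_num at h; rw [h, b_one]
lemma a_four : aFun 4 = 2 := by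
  have h := a_even 1; norm_num at h
  rw [e_one, a_two, a_one, b_one] at h; omega
lemma b_five : bFun 5 = 2 := by have h := b_odd 2; norm_num at h; rw [h, b_two]
lemma e_five : eFun 5 = 0 := by have h := e_odd 2; norm_num at h; exact h
lemma a_five : aFun 5 = 1 := by have h := a_odd 2; norm_num at h; rw [h, a_two]
lemma b_six : bFun 6 = 3 := by have h := b_even 2; norm_num at h; rw [h, b_three, b_two]
lemma a_six : aFun 6 = 2 := by
  have h := a_even 2; norm_num at h
  rw [e_two, a_three, a_two, b_two] at h; omega
lemma b_ten : bFun 10 = 5 := by have h := b_even 4; norm_num at h; rw [h, b_five, b_four]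
lemma a_ten : aFun 10 = 5 := by
  have h := a_even 4; norm_num at h
  rw [e_four, a_five, a_four, b_four] at h; omega
lemma b_twelve : bFun 12 = 5 := by have h := b_even 5; norm_num at h; rw [h, b_six, b_five]
lemma a_twelve : aFun 12 = 5 := by
  have h := a_even 5; norm_num at h
  rw [e_five, a_six, a_five, b_five] at h; omega

lemma pow_sub1 : ∀ k, bFun (2 ^ k - 1) = 1 ∧ aFun (2 ^ k - 1) = 0 ∧ eFun (2 ^ k - 1) = 0 := by
  intro k
  induction k with
  | zero => norm_num; exact ⟨b_zero, a_zero, e_zero⟩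
  | succ i ih =>
      have hp := two_pow_pos' i
      have h2 : 2 ^ (i + 1) - 1 = 2 * (2 ^ i - 1) + 1 := by rw [pow_succ]; omega
      rw [h2, b_odd, a_odd, e_odd]
      exact ⟨ih.1, ih.2.1, rfl⟩

lemma D_pow : ∀ k, bFun (2 ^ k) = aFun (2 ^ k) + 1 := by
  intro k
  induction k with
  | zero => norm_num; rw [b_one, a_one]
  | succ i ih =>
      have hp := two_pow_pos' i
      have h2 : 2 ^ (i + 1) = 2 * (2 ^ i - 1) + 2 := by rw [pow_succ]; omega
      have ha := a_even (2 ^ i - 1)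
      have hb := b_even (2 ^ i - 1)
      have he : 2 ^ i - 1 + 1 = 2 ^ i := by omega
      rw [he] at ha hb
      obtain ⟨hs1, hs2, hs3⟩ := pow_sub1 i
      rw [h2]
      omega

lemma D_three_pow : ∀ j, bFun (3 * 2 ^ (j + 2)) ≤ aFun (3 * 2 ^ (j + 2)) := by
  intro j
  induction j with
  | zero =>
      rw [show 3 * 2 ^ (0 + 2) = 12 by norm_num, b_twelve, a_twelve]
  | succ i ih =>
      have hp : 0 < 2 ^ (i + 1) := two_pow_pos' _
      have hp2 : 0 < 2 ^ (i + 2) := two_pow_pos' _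
      have h1 : 3 * 2 ^ (i + 1 + 2) = 2 * (3 * 2 ^ (i + 2) - 1) + 2 := by
        rw [show i + 1 + 2 = (i + 2) + 1 by omega, pow_succ]
        omega
      have h2 : 3 * 2 ^ (i + 2) - 1 + 1 = 3 * 2 ^ (i + 2) := by omega
      have ha := a_even (3 * 2 ^ (i + 2) - 1)
      have hb := b_even (3 * 2 ^ (i + 2) - 1)
      rw [h2] at ha hb
      have h3 : 3 * 2 ^ (i + 2) - 1 = 2 * (3 * 2 ^ (i + 1) - 1) + 1 := by
        have hps : 2 ^ (i + 2) = 2 ^ (i + 1) * 2 := pow_succ 2 (i + 1)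
        omega
      have hem : eFun (3 * 2 ^ (i + 2) - 1) = 0 := by rw [h3]; exact e_odd _
      rw [h1]
      omega

end HBX

open HBX
/-- An even nonnegative integer `n` satisfies `v(n) = 1` iff `n = 10` or `n = 12`. -/
theorem v_eq_one_iff_even (n : ℕ) (hn : Even n) :
    vFun n = 1 ↔ n = 10 ∨ n = 12 := by
  have hba := (key n).1
  have hv : vFun n = 1 ↔ aFun n = bFun n := by unfold vFun; omega
  rw [hv]
  obtain ⟨s, hs⟩ := hn
  rcases Nat.eq_zero_or_pos n with rfl | hpos
  · rw [a_zero, b_zero]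
    constructor
    · omega
    · rintro (h | h) <;> omega
  · obtain ⟨m, rfl⟩ : ∃ m, n = 2 * m + 2 := ⟨s - 1, by omega⟩
    have ha := a_even m
    have hb := b_even m
    obtain ⟨kb1, ke1, k01, k11, kee1, ke11⟩ := key (m + 1)
    obtain ⟨kb, ke, k0, k1, kee, ke1'⟩ := key m
    have hbp1 := b_pos (m + 1)
    have helt := e_lt_b m
    constructor
    · intro h
      have hcase : (bFun (m + 1) = aFun (m + 1) + 1 ∧ aFun m = eFun m + 1) ∨
          (bFun (m + 1) = aFun (m + 1) ∧ aFun m = eFun m) := by omega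
      rcases hcase with ⟨h1, h2⟩ | ⟨h1, h2⟩
      · rcases ke1'.1 h2 with h3 | ⟨k, hk⟩
        · left; omega
        · cases k with
          | zero => right; norm_num at hk; omega
          | succ j =>
              exfalso
              have hm1 : m + 1 = 3 * 2 ^ (j + 2) := by
                have hps : (2:ℕ) ^ (j + 2) = 2 ^ (j + 1) * 2 := pow_succ 2 (j + 1)
                rw [pow_succ] at hk
                omega
              have hd3 := D_three_pow j
              rw [← hm1] at hd3
              omega
      · rcases kee.1 h2 with ⟨k, hk⟩ | ⟨k, hk⟩
        · exfalso
          have hD := D_pow k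
          rw [← hk] at hD
          omega
        · exfalso
          have h0 : aFun (m + 1) = 0 := k01.2 ⟨k, by omega⟩
          omega
    · rintro (h | h)
      · have hm : m = 4 := by omega
        subst hm
        rw [show 2 * 4 + 2 = 10 by norm_num, a_ten, b_ten]
      · have hm : m = 5 := by omega
        subst hm
        rw [show 2 * 5 + 2 = 12 by norm_num, a_twelve, b_twelve]
end
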